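/- Let f : ℕ → [0,∞) with f(0) > f(k) for all k ≥ 1, a > 0, and suppose there exist N ≥ 0 and c > 0 with c < f(0), f(N) ≠ c, and f(k) = c for all k > N. Let (y_k) solve the recurrence (R) for f, let q_k solve (R) for the sharp-peak landscape (f(0), c, c, …), and let C_j(f) = 1 + ∑_{h=1}^{j−1} ∑_{0=i_0<⋯<i_h<j} ∏_{t=1}^h binom(j−i_{t−1}, j−i_t) f(i_t)/(f(0)−f(i_t)). Then for all k > N: y_k = q_k + ∑_{j=1}^{N} (a^j/j!)·q_{k−j}·(f(j)/(f(0)−f(j)) − c/(f(0)−c))·C_j(f). -/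

import Mathlib

/-!
With `W`, `Y`, `Q` the generating functions of `aⁿ/n!`, `y` and `q`, the two recurrences read
`f 0 • Y = (f y) W` and `f 0 • Q = (c Q + f 0 - c) W`. Eliminating `W` gives
`Y = ((f - c) y / (f 0 - c)) Q`, a convolution of `q` with weights that vanish beyond `N`.
The recurrence for `y` is also solved explicitly, `y l = aˡ/l! · f 0/(f 0 - f l) · C_l(f)`, because
splitting a chain at its largest element gives
`C_l = 1 + ∑_{0<j<l} binom(l, j) f j/(f 0 - f j) C_j`.
-/

open Finset

/-- The coefficient `C_j(f) = 1 + ∑_{h=1}^{j-1} ∑_{0=i₀<i₁<⋯<i_h<j}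
    ∏_{t=1}^h binom(j-i_{t-1}, j-i_t) f(i_t)/(f 0 - f(i_t))`, where a chain
    `0 = i₀ < i₁ < ⋯ < i_h < j` is encoded by the finset
    `S = {i₁, …, i_h} ⊆ (0, j)` (the empty chain contributing `1`). -/
noncomputable def Ccoef (f : ℕ → ℝ) (l : ℕ) : ℝ :=
  ∑ S ∈ (Finset.Ioo 0 l).powerset,
    (List.zipWith
      (fun p n => ((Nat.choose (l - p) (l - n) : ℕ) : ℝ) * (f n / (f 0 - f n)))
      (0 :: S.sort (· ≤ ·)) (S.sort (· ≤ ·))).prod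

open scoped Nat

theorem Finset.sort_insert_of_forall_lt {α : Type*} [LinearOrder α] {s : Finset α} {a : α}
    (h : ∀ b ∈ s, b < a) : (insert a s).sort (· ≤ ·) = s.sort (· ≤ ·) ++ [a] := by
  have ha : a ∉ s := fun ha => (h a ha).false
  refine List.Perm.eq_of_pairwise' (pairwise_sort _ _) ?_ ?_
  · simp only [List.pairwise_append, pairwise_sort, List.pairwise_singleton, List.mem_singleton,
      mem_sort, true_and]
    rintro b hb _ rfl
    exact (h b hb).le
  · rw [List.perm_ext_iff_of_nodup (sort_nodup _ _)]
    · simp [or_comm]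
    · simpa [List.nodup_append, sort_nodup] using ha

noncomputable def chainWeight (f : ℕ → ℝ) (l : ℕ) : ℕ → List ℕ → ℝ
  | _, [] => 1
  | p, n :: L => ((l - p).choose (l - n) : ℝ) * (f n / (f 0 - f n)) * chainWeight f l n L

theorem Ccoef_eq_sum_chainWeight (f : ℕ → ℝ) (l : ℕ) :
    Ccoef f l = ∑ S ∈ (Ioo 0 l).powerset, chainWeight f l 0 (S.sort (· ≤ ·)) := by
  have h (p : ℕ) (L : List ℕ) : chainWeight f l p L =
      (List.zipWith (fun p n => ((Nat.choose (l - p) (l - n) : ℕ) : ℝ) * (f n / (f 0 - f n)))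
        (p :: L) L).prod := by
    induction L generalizing p <;> simp [chainWeight, *]
  simp only [Ccoef, h]

theorem chainWeight_append_singleton (f : ℕ → ℝ) {l j : ℕ} (hjl : j ≤ l) {p : ℕ} {L : List ℕ}
    (hL : (p :: (L ++ [j])).Pairwise (· ≤ ·)) :
    chainWeight f l p (L ++ [j]) =
      ((l - p).choose (l - j) : ℝ) * (f j / (f 0 - f j)) * chainWeight f j p L := by
  induction L generalizing p with
  | nil => simp [chainWeight]
  | cons n L ih =>
    obtain ⟨hp, hL⟩ := List.pairwise_cons.1 hL
    have hpn : p ≤ n := hp n (by simp)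
    have hnj : n ≤ j := (List.pairwise_cons.1 hL).1 j (by simp)
    have hchoose : (l - p).choose (l - n) * (l - n).choose (l - j) =
        (l - p).choose (l - j) * (j - p).choose (j - n) := by
      rw [Nat.choose_mul (by omega), show l - p - (l - j) = j - p by omega,
        show l - n - (l - j) = j - n by omega]
    simp only [List.cons_append, chainWeight, ih hL]
    have := congrArg (Nat.cast (R := ℝ)) hchoose
    push_cast at this
    linear_combination (f n / (f 0 - f n) * (f j / (f 0 - f j)) * chainWeight f j n L) * this

theorem sum_powerset_Ioo_chainWeight (f : ℕ → ℝ) {l m : ℕ} (hm : m ≤ l) :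
    ∑ S ∈ (Ioo 0 m).powerset, chainWeight f l 0 (S.sort (· ≤ ·)) =
      1 + ∑ j ∈ Ioo 0 m, (l.choose j : ℝ) * (f j / (f 0 - f j)) * Ccoef f j := by
  induction m with
  | zero => simp [chainWeight]
  | succ m ih =>
    rcases Nat.eq_zero_or_pos m with rfl | hm0
    · simp [show Ioo 0 1 = ∅ by rfl, chainWeight]
    have hIoo : Ioo 0 (m + 1) = insert m (Ioo 0 m) := by ext; simp; omega
    have hins (S) (hS : S ∈ (Ioo 0 m).powerset) :
        chainWeight f l 0 ((insert m S).sort (· ≤ ·)) =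
          (l.choose m : ℝ) * (f m / (f 0 - f m)) * chainWeight f m 0 (S.sort (· ≤ ·)) := by
      have hlt : ∀ b ∈ S, b < m := fun b hb => (mem_Ioo.1 (mem_powerset.1 hS hb)).2
      have hsorted : (0 :: (S.sort (· ≤ ·) ++ [m])).Pairwise (· ≤ ·) := by
        rw [← sort_insert_of_forall_lt hlt]
        exact List.pairwise_cons.2 ⟨fun _ _ => Nat.zero_le _, pairwise_sort _ _⟩
      rw [sort_insert_of_forall_lt hlt, chainWeight_append_singleton f (by omega) hsorted,
        Nat.sub_zero, Nat.choose_symm (by omega)]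
    rw [hIoo, sum_powerset_insert (by simp), ih (by omega), sum_congr rfl hins, ← mul_sum,
      ← Ccoef_eq_sum_chainWeight, sum_insert (by simp)]
    ring

theorem Ccoef_eq_one_add_sum (f : ℕ → ℝ) (l : ℕ) :
    Ccoef f l = 1 + ∑ j ∈ Ioo 0 l, (l.choose j : ℝ) * (f j / (f 0 - f j)) * Ccoef f j := by
  rw [Ccoef_eq_sum_chainWeight, sum_powerset_Ioo_chainWeight f le_rfl]

open PowerSeries in
theorem C_mul_mk_eq_mk_mul_mk_of_recurrence {R : Type*} [CommRing R] {f w y : ℕ → R}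
    (hw : w 0 = 1)
    (hy : ∀ k, 1 ≤ k → (f 0 - f k) * y k = ∑ j ∈ range k, y j * f j * w (k - j)) :
    C (f 0) * mk y = mk (fun j => y j * f j) * mk w := by
  ext k
  rw [coeff_C_mul, coeff_mul, Nat.sum_antidiagonal_eq_sum_range_succ
    (fun i j => coeff i (mk _) * coeff j (mk w)), sum_range_succ]
  simp only [coeff_mk, Nat.sub_self, hw]
  rcases Nat.eq_zero_or_pos k with rfl | hk
  · simp [mul_comm]
  · linear_combination hy k hk

open PowerSeries in
theorem eq_sum_range_mul_of_recurrence {K : Type*} [Field K] {f w y q : ℕ → K} {c : K}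
    (hc : f 0 ≠ c) (hw : w 0 = 1) (hq0 : q 0 = 1)
    (hy : ∀ k, 1 ≤ k → (f 0 - f k) * y k = ∑ j ∈ range k, y j * f j * w (k - j))
    (hq : ∀ k, 1 ≤ k →
      (f 0 - c) * q k = ∑ j ∈ range k, q j * (if j = 0 then f 0 else c) * w (k - j))
    (k : ℕ) :
    y k = ∑ j ∈ range (k + 1), (f j - c) / (f 0 - c) * y j * q (k - j) := by
  have hfc : f 0 - c ≠ 0 := sub_ne_zero.2 hc
  have hY := C_mul_mk_eq_mk_mul_mk_of_recurrence hw hy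
  have hQ := C_mul_mk_eq_mk_mul_mk_of_recurrence (f := fun j => if j = 0 then f 0 else c) hw
    fun k hk => by simpa [Nat.one_le_iff_ne_zero.1 hk] using hq k hk
  have hG : mk (fun j => q j * if j = 0 then f 0 else c) = C c * mk q + (C (f 0) - C c) := by
    ext (_ | n) <;> simp [hq0, mul_comm]
  have hD : C (f 0) - C c * mk w ≠ 0 := fun h => by
    simpa [hw, sub_eq_zero, hc] using congrArg constantCoeff h
  have hF : mk (fun j => (f j - c) / (f 0 - c) * y j) =
      C (f 0 - c)⁻¹ * (mk (fun j => y j * f j) - C c * mk y) := by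
    ext n; simp only [coeff_mk, coeff_C_mul, map_sub]; ring
  have key : mk y = mk (fun j => (f j - c) / (f 0 - c) * y j) * mk q := by
    -- after multiplying by `f 0 - c W`, both recurrences turn each side into `(f 0 - c W) Y`
    apply mul_left_cancel₀ hD
    rw [hF]
    rw [if_pos rfl, hG] at hQ
    have hinv : C (f 0 - c)⁻¹ * (C (f 0) - C c) = (1 : K⟦X⟧) := by
      rw [← map_sub, ← map_mul, inv_mul_cancel₀ hfc, map_one]
    linear_combination -(C (f 0 - c)⁻¹ * (mk (fun j => y j * f j) - C c * mk y)) * hQ -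
      (mk (fun j => y j * f j) - C c * mk y) * mk w * hinv + hY
  have := congrArg (coeff k) key
  rw [coeff_mk, coeff_mul, Nat.sum_antidiagonal_eq_sum_range_succ
    (fun i j => coeff i (mk _) * coeff j (mk q))] at this
  simpa only [coeff_mk] using this

theorem pow_div_factorial_mul_pow_div_factorial {K : Type*} [Field K] [CharZero K] (a : K)
    {j l : ℕ} (hjl : j ≤ l) :
    a ^ j / j ! * (a ^ (l - j) / (l - j)!) = l.choose j * (a ^ l / l !) := by
  have hpow : a ^ l = a ^ j * a ^ (l - j) := by rw [← pow_add, Nat.add_sub_cancel' hjl]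
  have hl : (l ! : K) ≠ 0 := Nat.cast_ne_zero.2 l.factorial_ne_zero
  rw [Nat.cast_choose K hjl, hpow]
  field_simp

theorem eq_pow_div_factorial_mul_Ccoef {f y : ℕ → ℝ} {a : ℝ} (hf : ∀ k, 1 ≤ k → f k ≠ f 0)
    (hy0 : y 0 = 1)
    (hy : ∀ k, 1 ≤ k → (f 0 - f k) * y k = ∑ j ∈ range k, y j * f j * (a ^ (k - j) / (k - j)!))
    (l : ℕ) (hl : 1 ≤ l) :
    y l = a ^ l / l ! * (f 0 / (f 0 - f l)) * Ccoef f l := by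
  induction l using Nat.strong_induction_on with | _ l ih => ?_
  have hfl : f 0 - f l ≠ 0 := sub_ne_zero.2 (hf l hl).symm
  have hterm (j) (hj : j ∈ Ioo 0 l) : y j * f j * (a ^ (l - j) / (l - j)!) =
      f 0 * (a ^ l / l !) * ((l.choose j : ℝ) * (f j / (f 0 - f j)) * Ccoef f j) := by
    obtain ⟨hj0, hjl⟩ := mem_Ioo.1 hj
    rw [ih j hjl hj0]
    linear_combination (f 0 / (f 0 - f j) * Ccoef f j * f j) *
      pow_div_factorial_mul_pow_div_factorial a hjl.le
  have hrange : range l = insert 0 (Ioo 0 l) := by ext; simp; omega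
  apply mul_left_cancel₀ hfl
  rw [hy l hl, hrange, sum_insert (by simp), sum_congr rfl hterm, ← mul_sum,
    Ccoef_eq_one_add_sum f l, hy0, Nat.sub_zero]
  field_simp

theorem eventually_constant_landscape_general
    (f : ℕ → ℝ) (hf : ∀ k, 1 ≤ k → f k < f 0)
    (a : ℝ)
    (N : ℕ) (c : ℝ) (hcf : c < f 0)
    (hconst : ∀ k, N < k → f k = c)
    (y : ℕ → ℝ) (hy0 : y 0 = 1)
    (hy : ∀ k, 1 ≤ k →
      y k = (1 / (f 0 - f k)) *
        ∑ j ∈ Finset.range k, y j * f j * a ^ (k - j) / (Nat.factorial (k - j)))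
    (q : ℕ → ℝ) (hq0 : q 0 = 1)
    (hq : ∀ k, 1 ≤ k →
      q k = (1 / (f 0 - c)) *
        ∑ j ∈ Finset.range k,
          q j * (if j = 0 then f 0 else c) * a ^ (k - j) / (Nat.factorial (k - j))) :
    ∀ k, N < k →
      y k = q k +
        ∑ j ∈ Finset.Icc 1 N,
          a ^ j / (Nat.factorial j) * q (k - j) *
            (f j / (f 0 - f j) - c / (f 0 - c)) * Ccoef f j := by
  intro k hNk
  have hfc : f 0 - c ≠ 0 := sub_ne_zero.2 hcf.ne'
  have hfj (j) (hj : 1 ≤ j) : f 0 - f j ≠ 0 := sub_ne_zero.2 (hf j hj).ne'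
  have rec_y (k) (hk : 1 ≤ k) : (f 0 - f k) * y k =
      ∑ j ∈ range k, y j * f j * (a ^ (k - j) / (k - j)!) := by
    simp only [hy k hk, ← mul_assoc, mul_one_div_cancel (hfj k hk), one_mul, mul_div_assoc]
  have rec_q (k) (hk : 1 ≤ k) : (f 0 - c) * q k =
      ∑ j ∈ range k, q j * (if j = 0 then f 0 else c) * (a ^ (k - j) / (k - j)!) := by
    simp only [hq k hk, ← mul_assoc, mul_one_div_cancel hfc, one_mul, mul_div_assoc]
  have hrange : range (k + 1) = insert 0 (Icc 1 k) := by ext; simp; omega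
  rw [eq_sum_range_mul_of_recurrence (w := fun n => a ^ n / n !) hcf.ne' (by simp) hq0 rec_y
    rec_q k, hrange, sum_insert (by simp), ← sum_subset (Icc_subset_Icc_right hNk.le)]
  · congr 1
    · rw [div_self hfc, one_mul, hy0, one_mul, Nat.sub_zero]
    · refine sum_congr rfl fun j hj => ?_
      have hj1 := (mem_Icc.1 hj).1
      rw [eq_pow_div_factorial_mul_Ccoef (fun k hk => (hf k hk).ne) hy0 rec_y j hj1]
      field_simp [hfj j hj1]
      ring
  · intro j hjk hjN
    rw [hconst j (by simp at hjk hjN; omega), sub_self, zero_div, zero_mul, zero_mul]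

theorem eventually_constant_landscape
    (f : ℕ → ℝ) (hf0 : ∀ k, 0 ≤ f k) (hf : ∀ k, 1 ≤ k → f k < f 0)
    (a : ℝ) (ha : 0 < a)
    (N : ℕ) (c : ℝ) (hc : 0 < c) (hcf : c < f 0)
    (hN : f N ≠ c) (hconst : ∀ k, N < k → f k = c)
    (y : ℕ → ℝ) (hy0 : y 0 = 1)
    (hy : ∀ k, 1 ≤ k →
      y k = (1 / (f 0 - f k)) *
        ∑ j ∈ Finset.range k, y j * f j * a ^ (k - j) / (Nat.factorial (k - j)))
    (q : ℕ → ℝ) (hq0 : q 0 = 1)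
    (hq : ∀ k, 1 ≤ k →
      q k = (1 / (f 0 - c)) *
        ∑ j ∈ Finset.range k,
          q j * (if j = 0 then f 0 else c) * a ^ (k - j) / (Nat.factorial (k - j))) :
    ∀ k, N < k →
      y k = q k +
        ∑ j ∈ Finset.Icc 1 N,
          a ^ j / (Nat.factorial j) * q (k - j) *
            (f j / (f 0 - f j) - c / (f 0 - c)) * Ccoef f j :=
  eventually_constant_landscape_general f hf a N c hcf hconst y hy0 hy q hq0 hq
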